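/- arXiv:math/0402151 — 2 statements merged into one kernel-verified Lean document; each statement's English description precedes it below -/
import Mathlib

section
/- In any double algebra, the restriction $\Phi_L|_B : B \to L$ is an algebra isomorphism of vertical algebras with inverse $\Phi_B|_L : L \to B$; in particular for all $b, b' \in B$, $\Phi_L(b)\circ\Phi_L(b') = \Phi_L(b\star b')$. -/
/-- A double algebra over a commutative ring `k`: a `k`-module `A` with two
associative unital bilinear multiplications, the vertical `vmul` (written `∘` in the
paper, unit `e`) and the horizontal `hmul` (written `⋆`, unit `i`), satisfying
axioms A1–A8 of Szlachányi's Definition 1.1. -/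
structure DoubleAlgebra (k : Type*) (A : Type*) [CommRing k] [AddCommGroup A]
    [Module k A] where
  vmul : A →ₗ[k] A →ₗ[k] A
  hmul : A →ₗ[k] A →ₗ[k] A
  e : A
  i : A
  vmul_assoc : ∀ a b c, vmul (vmul a b) c = vmul a (vmul b c)
  hmul_assoc : ∀ a b c, hmul (hmul a b) c = hmul a (hmul b c)
  vmul_e : ∀ a, vmul a e = a
  e_vmul : ∀ a, vmul e a = a
  hmul_i : ∀ a, hmul a i = a
  i_hmul : ∀ a, hmul i a = a
  A1 : ∀ a b, vmul (hmul a e) b = hmul (vmul (hmul a e) i) b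
  A2 : ∀ a b, vmul a (hmul b e) = hmul (vmul i (hmul b e)) a
  A3 : ∀ a b, hmul (vmul a i) b = vmul (hmul (vmul a i) e) b
  A4 : ∀ a b, hmul a (vmul b i) = vmul (hmul e (vmul b i)) a
  A5 : ∀ a b, vmul a (hmul e b) = hmul a (vmul i (hmul e b))
  A6 : ∀ a b, vmul (hmul e a) b = hmul b (vmul (hmul e a) i)
  A7 : ∀ a b, hmul a (vmul i b) = vmul a (hmul e (vmul i b))
  A8 : ∀ a b, hmul (vmul i a) b = vmul b (hmul (vmul i a) e)

variable {k A : Type*} [CommRing k] [AddCommGroup A] [Module k A]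

/-- `Φ_L(a) = a ⋆ e`. -/
def DoubleAlgebra.PhiL (D : DoubleAlgebra k A) (a : A) : A := D.hmul a D.e
/-- `Φ_R(a) = e ⋆ a`. -/
def DoubleAlgebra.PhiR (D : DoubleAlgebra k A) (a : A) : A := D.hmul D.e a
/-- `Φ_B(a) = a ∘ i`. -/
def DoubleAlgebra.PhiB (D : DoubleAlgebra k A) (a : A) : A := D.vmul a D.i
/-- `Φ_T(a) = i ∘ a`. -/
def DoubleAlgebra.PhiT (D : DoubleAlgebra k A) (a : A) : A := D.vmul D.i a

namespace DoubleAlgebra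

variable (D : DoubleAlgebra k A)

theorem PhiB_PhiL_PhiB (a : A) : D.PhiB (D.PhiL (D.PhiB a)) = D.PhiB a := by
  rw [PhiB, PhiL, PhiB, ← D.A3 a D.i, D.hmul_i]

theorem PhiL_PhiB_PhiL (a : A) : D.PhiL (D.PhiB (D.PhiL a)) = D.PhiL a := by
  rw [PhiL, PhiB, PhiL, ← D.A1 a D.e, D.vmul_e]

theorem PhiL_i : D.PhiL D.i = D.e :=
  D.i_hmul D.e

/-- By A1, `Φ_L(b) ∘ x = Φ_B(Φ_L(b)) ⋆ x`, and `Φ_B ∘ Φ_L` is the identity on `B`. -/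
theorem vmul_PhiL_PhiL {b : A} (hb : b ∈ Set.range D.PhiB) (b' : A) :
    D.vmul (D.PhiL b) (D.PhiL b') = D.PhiL (D.hmul b b') := by
  obtain ⟨a, rfl⟩ := hb
  have hA1 := D.A1 (D.PhiB a) (D.PhiL b')
  rw [← PhiL, ← PhiB, PhiB_PhiL_PhiB] at hA1
  rw [hA1, PhiL, PhiL, D.hmul_assoc]

end DoubleAlgebra

/-- `Φ_L|_B : B → L` is an algebra isomorphism of vertical algebras
with inverse `Φ_B|_L`; in particular `Φ_L(b)∘Φ_L(b') = Φ_L(b⋆b')` for `b,b' ∈ B`. -/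
theorem stmt4 (D : DoubleAlgebra k A) :
    (∀ b ∈ Set.range D.PhiB, D.PhiL b ∈ Set.range D.PhiL) ∧
    (∀ l ∈ Set.range D.PhiL, D.PhiB l ∈ Set.range D.PhiB) ∧
    (∀ b ∈ Set.range D.PhiB, D.PhiB (D.PhiL b) = b) ∧
    (∀ l ∈ Set.range D.PhiL, D.PhiL (D.PhiB l) = l) ∧
    (∀ b ∈ Set.range D.PhiB, ∀ b' ∈ Set.range D.PhiB,
      D.vmul (D.PhiL b) (D.PhiL b') = D.PhiL (D.hmul b b')) ∧
    D.PhiL D.i = D.e := by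
  refine ⟨fun b _ => ⟨b, rfl⟩, fun l _ => ⟨l, rfl⟩, ?_, ?_,
    fun b hb b' _ => D.vmul_PhiL_PhiL hb b', D.PhiL_i⟩
  · rintro _ ⟨a, rfl⟩
    exact D.PhiB_PhiL_PhiB a
  · rintro _ ⟨a, rfl⟩
    exact D.PhiL_PhiB_PhiL a
end

section
/- In any double algebra, for all $a \in A$ and $t \in T$, $\Phi_B(a\star t) = \Phi_B(\nu_B(t)\star a)$, where $\nu_B(t) := \Phi_T\Phi_L\Phi_B\Phi_R(t)$ (a Nakayama-type automorphism of $T$ relative to $\Phi_B$). -/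
variable {k A : Type*} [CommRing k] [AddCommGroup A] [Module k A]

/-! By A7 and A8, multiplying by an element of `T` on either side under `Φ_B` becomes a vertical
right multiplication: `Φ_B(a ⋆ t) = a ∘ Φ_B Φ_R(t)` and `Φ_B(t ⋆ a) = a ∘ Φ_B Φ_L(t)`. The theorem
then reduces to `Φ_B Φ_L Φ_T Φ_L Φ_B = Φ_B`, which follows from the idempotence-type identities
`Φ_L Φ_T Φ_L = Φ_L` (A2) and `Φ_B Φ_L Φ_B = Φ_B` (A3). -/

namespace DoubleAlgebra

variable (D : DoubleAlgebra k A)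

theorem PhiB_hmul_PhiT (a s : A) :
    D.PhiB (D.hmul a (D.PhiT s)) = D.vmul a (D.PhiB (D.PhiR (D.PhiT s))) := by
  simp only [PhiB, PhiT, PhiR]
  rw [D.A7, D.vmul_assoc]

theorem PhiB_PhiT_hmul (s a : A) :
    D.PhiB (D.hmul (D.PhiT s) a) = D.vmul a (D.PhiB (D.PhiL (D.PhiT s))) := by
  simp only [PhiB, PhiT, PhiL]
  rw [D.A8, D.vmul_assoc]

theorem PhiL_PhiT_PhiL (a : A) : D.PhiL (D.PhiT (D.PhiL a)) = D.PhiL a := by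
  simp only [PhiL, PhiT]
  rw [← D.A2, D.e_vmul]

end DoubleAlgebra

/-- for `t ∈ T`, `Φ_B(a ⋆ t) = Φ_B(ν_B(t) ⋆ a)` where
`ν_B = Φ_T Φ_L Φ_B Φ_R`. -/
theorem stmt9 (D : DoubleAlgebra k A) (a t : A) (ht : t ∈ Set.range D.PhiT) :
    D.PhiB (D.hmul a t) =
      D.PhiB (D.hmul (D.PhiT (D.PhiL (D.PhiB (D.PhiR t)))) a) := by
  obtain ⟨s, rfl⟩ := ht
  rw [D.PhiB_hmul_PhiT, D.PhiB_PhiT_hmul, D.PhiL_PhiT_PhiL, D.PhiB_PhiL_PhiB]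
end
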